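/- arXiv:1306.4397 — 5 statements merged into one kernel-verified Lean document; each statement's English description precedes it below -/
import Mathlib

section
/- Proposition 1 (LASSO as a limit of LES): Fix γ > 0 and weights w_k = p_k/p. Assume X^T X is positive definite, so that for each α > 0 the LES objective with λ = γp/α has a unique minimizer β̂^{LES}(α), and the LASSO objective (1/(2n))‖y − Xβ‖₂² + γ Σ_{k=1}^K Σ_{j=1}^{p_k} |β_{kj}| has a unique minimizer β̂^{LASSO}. Then β̂^{LES}(α) − β̂^{LASSO} → 0 as α → 0⁺ (keeping λα/p = γ). -/
/-!
Jensen's inequality and `log t ≤ t - 1` sandwich the log-sum-exp of each group: with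
`c_α = α⁻¹ ∑ₖ pₖ log pₖ`,
`LASSO(β) + γ c_α ≤ LES_α(β) ≤ leastSquares(β) + γ ∑ⱼ (exp (α |βⱼ|) - 1) / α + γ c_α`.
Comparing `LES_α` at its minimizer and at `β̂^LASSO` therefore bounds `LASSO(β̂^LES(α))` by a
quantity tending to `LASSO(β̂^LASSO)` as `α → 0⁺`. Since `XᵀX ≻ 0`, the LASSO objective is
strictly convex, continuous and coercive, and such a function's approximate minimizers converge to
its unique minimizer.
-/

open Filter Topology Set Finset Real

theorem StrictConvexOn.lt_of_isMinOn {E : Type*} [AddCommGroup E] [Module ℝ E] {s : Set E}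
    {f : E → ℝ} {x b : E} (hf : StrictConvexOn ℝ s f) (hb : IsMinOn f s b) (hbs : b ∈ s)
    (hxs : x ∈ s) (hne : x ≠ b) : f b < f x :=
  lt_of_not_ge fun hle => hne <| hf.eq_of_isMinOn (fun _ hz => hle.trans (hb hz)) hb hxs hbs

theorem tendsto_nhds_of_le_of_tendsto_min {E α : Type*} [TopologicalSpace E] {f : E → ℝ}
    {x₀ : E} (hf : Continuous f) (hcoer : Tendsto f (cocompact E) atTop)
    (hmin : ∀ x ≠ x₀, f x₀ < f x) {l : Filter α} {u : α → E} {v : α → ℝ}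
    (hu : ∀ᶠ a in l, f (u a) ≤ v a) (hv : Tendsto v l (𝓝 (f x₀))) : Tendsto u l (𝓝 x₀) := by
  rw [tendsto_nhds]
  intro U hU hx₀
  rcases (Uᶜ).eq_empty_or_nonempty with hUc | ⟨z, hz⟩
  · simp [compl_empty_iff.mp hUc]
  obtain ⟨m, hmU, hm⟩ := hf.continuousOn.exists_isMinOn' hU.isClosed_compl hz
    ((hcoer.eventually (eventually_ge_atTop (f z))).filter_mono inf_le_left)
  have hgap : f x₀ < f m := hmin m fun h => hmU (h ▸ hx₀)
  filter_upwards [hu, hv.eventually (eventually_lt_nhds hgap)] with a hua hva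
  by_contra hna
  exact (hm hna).not_gt (hua.trans_lt hva)

theorem tendsto_exp_mul_sub_one_div (t : ℝ) :
    Tendsto (fun α => (exp (α * t) - 1) / α) (𝓝[≠] 0) (𝓝 t) := by
  have hderiv : HasDerivAt (fun α => exp (α * t)) t 0 := by
    simpa using ((hasDerivAt_mul_const t).exp : HasDerivAt _ _ (0 : ℝ))
  refine (hasDerivAt_iff_tendsto_slope.mp hderiv).congr fun α => ?_
  simp [slope_def_field]

section LogSumExp

variable {ι : Type*} [Fintype ι] [Nonempty ι]

theorem card_mul_log_card_add_sum_le (x : ι → ℝ) :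
    Fintype.card ι * log (Fintype.card ι) + ∑ i, x i
      ≤ Fintype.card ι * log (∑ i, exp (x i)) := by
  have hc : (0 : ℝ) < Fintype.card ι := by exact_mod_cast Fintype.card_pos
  have hjensen :
      exp (∑ i, (Fintype.card ι : ℝ)⁻¹ * x i) ≤ ∑ i, (Fintype.card ι : ℝ)⁻¹ * exp (x i) :=
    convexOn_exp.map_sum_le (fun _ _ => by positivity) (by simp [hc.ne'])
      (fun _ _ => mem_univ _)
  rw [← mul_sum, ← mul_sum, ← le_log_iff_exp_le (by positivity), log_mul (by positivity)
    (by positivity), log_inv, inv_mul_le_iff₀ hc, mul_add] at hjensen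
  linarith

theorem card_mul_log_sum_exp_le (x : ι → ℝ) :
    Fintype.card ι * log (∑ i, exp (x i))
      ≤ Fintype.card ι * log (Fintype.card ι) + ∑ i, (exp (x i) - 1) := by
  have hc : (0 : ℝ) < Fintype.card ι := by exact_mod_cast Fintype.card_pos
  have hS : 0 < ∑ i, exp (x i) := sum_pos (fun i _ => exp_pos _) univ_nonempty
  have h := log_le_sub_one_of_pos (div_pos hS hc)
  rw [log_div hS.ne' hc.ne', le_sub_iff_add_le, le_div_iff₀ hc] at h
  simp only [sum_sub_distrib, sum_const, card_univ, nsmul_eq_mul, mul_one]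
  nlinarith

end LogSumExp

section Lasso

variable {n : ℕ} {ι : Type*} [Fintype ι]

noncomputable def leastSquares (X : Fin n → ι → ℝ) (y : Fin n → ℝ) (β : ι → ℝ) : ℝ :=
  1 / (2 * (n : ℝ)) * ∑ i, (y i - ∑ j, X i j * β j) ^ 2

noncomputable def lassoObjective (X : Fin n → ι → ℝ) (y : Fin n → ℝ) (γ : ℝ) (β : ι → ℝ) : ℝ :=
  leastSquares X y β + γ * ∑ j, |β j|

theorem strictConvexOn_leastSquares (hn : 0 < n) {X : Fin n → ι → ℝ}
    (hX : ∀ v : ι → ℝ, v ≠ 0 → 0 < ∑ i, (∑ j, X i j * v j) ^ 2) (y : Fin n → ℝ) :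
    StrictConvexOn ℝ univ (leastSquares X y) := by
  refine ⟨convex_univ, fun β _ β' _ hne a b ha hb hab => ?_⟩
  have hgap := hX (β - β') (sub_ne_zero.mpr hne)
  have hterm : ∀ i, a * (y i - ∑ j, X i j * β j) ^ 2 + b * (y i - ∑ j, X i j * β' j) ^ 2
      - (y i - ∑ j, X i j * (a • β + b • β') j) ^ 2 = a * b * (∑ j, X i j * (β - β') j) ^ 2 := by
    intro i
    simp only [Pi.add_apply, Pi.smul_apply, Pi.sub_apply, smul_eq_mul, mul_add, mul_sub,
      sum_add_distrib, sum_sub_distrib, mul_left_comm _ a, mul_left_comm _ b, ← mul_sum]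
    rw [eq_sub_of_add_eq' hab]
    ring
  have hn' : (0 : ℝ) < n := by exact_mod_cast hn
  have hsum : a * leastSquares X y β + b * leastSquares X y β' - leastSquares X y (a • β + b • β')
      = 1 / (2 * n) * (a * b * ∑ i, (∑ j, X i j * (β - β') j) ^ 2) := by
    simp only [leastSquares, mul_sum, ← hterm]
    rw [← sum_add_distrib, ← sum_sub_distrib]
    exact sum_congr rfl fun i _ => by ring
  simp only [smul_eq_mul]
  nlinarith [mul_pos (mul_pos ha hb) hgap, one_div_pos.mpr (mul_pos two_pos hn')]

theorem convexOn_sum_abs : ConvexOn ℝ univ fun β : ι → ℝ => ∑ j, |β j| := by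
  refine ⟨convex_univ, fun β _ β' _ a b ha hb _ => ?_⟩
  simp only [Pi.add_apply, Pi.smul_apply, smul_eq_mul, mul_sum, ← sum_add_distrib]
  refine sum_le_sum fun j _ => (abs_add_le _ _).trans_eq ?_
  rw [abs_mul, abs_mul, abs_of_nonneg ha, abs_of_nonneg hb]

theorem strictConvexOn_lassoObjective (hn : 0 < n) {X : Fin n → ι → ℝ}
    (hX : ∀ v : ι → ℝ, v ≠ 0 → 0 < ∑ i, (∑ j, X i j * v j) ^ 2) (y : Fin n → ℝ) {γ : ℝ}
    (hγ : 0 ≤ γ) : StrictConvexOn ℝ univ (lassoObjective X y γ) :=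
  (strictConvexOn_leastSquares hn hX y).add_convexOn (convexOn_sum_abs.smul hγ)

theorem continuous_lassoObjective (X : Fin n → ι → ℝ) (y : Fin n → ℝ) (γ : ℝ) :
    Continuous (lassoObjective X y γ) := by
  unfold lassoObjective leastSquares
  fun_prop

theorem leastSquares_nonneg (X : Fin n → ι → ℝ) (y : Fin n → ℝ) (β : ι → ℝ) :
    0 ≤ leastSquares X y β :=
  mul_nonneg (by positivity) (sum_nonneg fun _ _ => sq_nonneg _)

theorem norm_le_sum_abs (β : ι → ℝ) : ‖β‖ ≤ ∑ j, |β j| :=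
  (pi_norm_le_iff_of_nonneg (sum_nonneg fun _ _ => abs_nonneg _)).mpr fun j =>
    single_le_sum (f := fun j => |β j|) (fun _ _ => abs_nonneg _) (mem_univ j)

theorem tendsto_lassoObjective_cocompact (X : Fin n → ι → ℝ) (y : Fin n → ℝ) {γ : ℝ}
    (hγ : 0 < γ) : Tendsto (lassoObjective X y γ) (cocompact (ι → ℝ)) atTop := by
  refine tendsto_atTop_mono (fun β => ?_) (tendsto_norm_cocompact_atTop.const_mul_atTop hγ)
  have := mul_le_mul_of_nonneg_left (norm_le_sum_abs β) hγ.le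
  have := leastSquares_nonneg X y β
  unfold lassoObjective
  linarith

end Lasso

section LES

variable {n : ℕ} {κ : Type*} [Fintype κ] {p : κ → ℕ}

/-- The LES objective with `λ = γ P / α` and weights `w k = p k / P`. -/
noncomputable def lesObjective (X : Fin n → (Σ k, Fin (p k)) → ℝ) (y : Fin n → ℝ) (γ : ℝ)
    (P : ℕ) (α : ℝ) (β : (Σ k, Fin (p k)) → ℝ) : ℝ :=
  leastSquares X y β
    + γ * P / α * ∑ k, ((p k : ℝ) / P) * log (∑ j : Fin (p k), exp (α * |β ⟨k, j⟩|))

noncomputable def lesPenalty (p : κ → ℕ) (α : ℝ) (β : (Σ k, Fin (p k)) → ℝ) : ℝ :=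
  α⁻¹ * ∑ k, (p k : ℝ) * log (∑ j : Fin (p k), exp (α * |β ⟨k, j⟩|))

theorem lesObjective_eq (hp : ∀ k, 1 ≤ p k) {P : ℕ} (hP : P = ∑ k, p k)
    (X : Fin n → (Σ k, Fin (p k)) → ℝ) (y : Fin n → ℝ) (γ α : ℝ) (β : (Σ k, Fin (p k)) → ℝ) :
    lesObjective X y γ P α β = leastSquares X y β + γ * lesPenalty p α β := by
  unfold lesObjective lesPenalty
  congr 1
  rw [mul_sum, mul_sum, mul_sum]
  refine sum_congr rfl fun k _ => ?_
  have hpP : p k ≤ P := hP ▸ single_le_sum (fun _ _ => Nat.zero_le _) (mem_univ k)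
  have hP0 : (0 : ℝ) < P := Nat.cast_pos.mpr ((hp k).trans hpP)
  field_simp

theorem le_lesPenalty (hp : ∀ k, 1 ≤ p k) {α : ℝ} (hα : 0 < α) (β : (Σ k, Fin (p k)) → ℝ) :
    α⁻¹ * ∑ k, (p k : ℝ) * log (p k) + ∑ j, |β j| ≤ lesPenalty p α β := by
  have hgroup (k : κ) : (p k : ℝ) * log (p k) + α * ∑ j : Fin (p k), |β ⟨k, j⟩|
      ≤ p k * log (∑ j : Fin (p k), exp (α * |β ⟨k, j⟩|)) := by
    have : Nonempty (Fin (p k)) := ⟨⟨0, hp k⟩⟩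
    simpa [mul_sum] using card_mul_log_card_add_sum_le fun j : Fin (p k) => α * |β ⟨k, j⟩|
  have hsum := sum_le_sum fun k (_ : k ∈ Finset.univ) => hgroup k
  rw [sum_add_distrib, ← mul_sum] at hsum
  unfold lesPenalty
  rw [le_inv_mul_iff₀ hα, mul_add, mul_inv_cancel_left₀ hα.ne', Fintype.sum_sigma]
  exact hsum

theorem lesPenalty_le (hp : ∀ k, 1 ≤ p k) {α : ℝ} (hα : 0 < α) (β : (Σ k, Fin (p k)) → ℝ) :
    lesPenalty p α β ≤ α⁻¹ * ∑ k, (p k : ℝ) * log (p k) + ∑ j, (exp (α * |β j|) - 1) / α := by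
  have hgroup (k : κ) : p k * log (∑ j : Fin (p k), exp (α * |β ⟨k, j⟩|))
      ≤ (p k : ℝ) * log (p k) + ∑ j : Fin (p k), (exp (α * |β ⟨k, j⟩|) - 1) := by
    have : Nonempty (Fin (p k)) := ⟨⟨0, hp k⟩⟩
    simpa using card_mul_log_sum_exp_le fun j : Fin (p k) => α * |β ⟨k, j⟩|
  have hsum := sum_le_sum fun k (_ : k ∈ Finset.univ) => hgroup k
  rw [sum_add_distrib] at hsum
  unfold lesPenalty
  rw [← sum_div, div_eq_inv_mul, ← mul_add, Fintype.sum_sigma]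
  exact mul_le_mul_of_nonneg_left hsum (inv_nonneg.mpr hα.le)

theorem lassoObjective_le_of_isMinOn_lesObjective (hp : ∀ k, 1 ≤ p k) {P : ℕ}
    (hP : P = ∑ k, p k) {X : Fin n → (Σ k, Fin (p k)) → ℝ} {y : Fin n → ℝ} {γ α : ℝ}
    (hγ : 0 ≤ γ) (hα : 0 < α) {β' : (Σ k, Fin (p k)) → ℝ}
    (hβ' : IsMinOn (lesObjective X y γ P α) univ β') (β : (Σ k, Fin (p k)) → ℝ) :
    lassoObjective X y γ β' ≤ leastSquares X y β + γ * ∑ j, (exp (α * |β j|) - 1) / α := by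
  have hmin := isMinOn_univ_iff.mp hβ' β
  rw [lesObjective_eq hp hP, lesObjective_eq hp hP] at hmin
  have hlower := mul_le_mul_of_nonneg_left (le_lesPenalty hp hα β') hγ
  have hupper := mul_le_mul_of_nonneg_left (lesPenalty_le hp hα β) hγ
  unfold lassoObjective
  linarith

end LES

theorem les_tendsto_lasso_general (n K : ℕ) (hn : 0 < n)
    (p : Fin K → ℕ) (hp : ∀ k, 1 ≤ p k)
    (P : ℕ) (hP : P = ∑ k : Fin K, p k)
    (X : Fin n → (Σ k : Fin K, Fin (p k)) → ℝ) (y : Fin n → ℝ)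
    (γ : ℝ) (hγ : 0 < γ)
    (hposdef : ∀ v : (Σ k : Fin K, Fin (p k)) → ℝ, v ≠ 0 →
      0 < ∑ i : Fin n, (∑ j : Σ k : Fin K, Fin (p k), X i j * v j) ^ 2)
    (bLES : ℝ → ((Σ k : Fin K, Fin (p k)) → ℝ)) (bLASSO : (Σ k : Fin K, Fin (p k)) → ℝ)
    (hLES : ∀ α : ℝ, 0 < α → IsMinOn
      (fun β : (Σ k : Fin K, Fin (p k)) → ℝ =>
        (1 / (2 * (n : ℝ))) * ∑ i : Fin n, (y i - ∑ j : Σ k : Fin K, Fin (p k), X i j * β j) ^ 2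
          + (γ * (P : ℝ) / α) * ∑ k : Fin K, ((p k : ℝ) / (P : ℝ)) *
              Real.log (∑ j : Fin (p k), Real.exp (α * |β ⟨k, j⟩|)))
      Set.univ (bLES α))
    (hLASSO : IsMinOn
      (fun β : (Σ k : Fin K, Fin (p k)) → ℝ =>
        (1 / (2 * (n : ℝ))) * ∑ i : Fin n, (y i - ∑ j : Σ k : Fin K, Fin (p k), X i j * β j) ^ 2
          + γ * ∑ j : Σ k : Fin K, Fin (p k), |β j|)
      Set.univ bLASSO) :
    Filter.Tendsto (fun α => bLES α - bLASSO) (nhdsWithin 0 (Set.Ioi 0)) (nhds 0) := by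
  have hLASSO : IsMinOn (lassoObjective X y γ) univ bLASSO := hLASSO
  have hstrict : ∀ β ≠ bLASSO, lassoObjective X y γ bLASSO < lassoObjective X y γ β :=
    fun β hne => (strictConvexOn_lassoObjective hn hposdef y hγ.le).lt_of_isMinOn hLASSO
      (mem_univ _) (mem_univ _) hne
  have hbound : ∀ᶠ α in 𝓝[>] 0, lassoObjective X y γ (bLES α)
      ≤ leastSquares X y bLASSO + γ * ∑ j, (exp (α * |bLASSO j|) - 1) / α :=
    eventually_mem_nhdsWithin.mono fun α hα =>
      lassoObjective_le_of_isMinOn_lesObjective hp hP hγ.le hα (hLES α hα) bLASSO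
  have hlimit : Tendsto
      (fun α => leastSquares X y bLASSO + γ * ∑ j, (exp (α * |bLASSO j|) - 1) / α)
      (𝓝[>] 0) (𝓝 (lassoObjective X y γ bLASSO)) :=
    tendsto_const_nhds.add <| (tendsto_finsetSum _ fun j _ =>
      (tendsto_exp_mul_sub_one_div _).mono_left
        (nhdsWithin_mono _ fun _ h => ne_of_gt h)).const_mul γ
  rw [tendsto_sub_nhds_zero_iff]
  exact tendsto_nhds_of_le_of_tendsto_min (continuous_lassoObjective X y γ)
    (tendsto_lassoObjective_cocompact X y hγ) hstrict hbound hlimit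

/-- **Proposition 1: LASSO as a limit of LES.**
Fix `γ > 0` and weights `w k = p k / p`.  Assume `XᵀX` is positive definite, so
that for each `α > 0` the LES objective with `λ = γ p / α` (i.e. `λ α / p = γ`)
has a unique minimizer `bLES α`, and the LASSO objective has a unique minimizer
`bLASSO`.  Then `bLES α - bLASSO → 0` as `α → 0⁺`. -/
theorem les_tendsto_lasso (n K : ℕ) (hn : 0 < n) (hK : 0 < K)
    (p : Fin K → ℕ) (hp : ∀ k, 1 ≤ p k)
    (P : ℕ) (hP : P = ∑ k : Fin K, p k)
    (X : Fin n → (Σ k : Fin K, Fin (p k)) → ℝ) (y : Fin n → ℝ)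
    (γ : ℝ) (hγ : 0 < γ)
    (hposdef : ∀ v : (Σ k : Fin K, Fin (p k)) → ℝ, v ≠ 0 →
      0 < ∑ i : Fin n, (∑ j : Σ k : Fin K, Fin (p k), X i j * v j) ^ 2)
    (bLES : ℝ → ((Σ k : Fin K, Fin (p k)) → ℝ)) (bLASSO : (Σ k : Fin K, Fin (p k)) → ℝ)
    (hLES : ∀ α : ℝ, 0 < α → IsMinOn
      (fun β : (Σ k : Fin K, Fin (p k)) → ℝ =>
        (1 / (2 * (n : ℝ))) * ∑ i : Fin n, (y i - ∑ j : Σ k : Fin K, Fin (p k), X i j * β j) ^ 2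
          + (γ * (P : ℝ) / α) * ∑ k : Fin K, ((p k : ℝ) / (P : ℝ)) *
              Real.log (∑ j : Fin (p k), Real.exp (α * |β ⟨k, j⟩|)))
      Set.univ (bLES α))
    (hLASSO : IsMinOn
      (fun β : (Σ k : Fin K, Fin (p k)) → ℝ =>
        (1 / (2 * (n : ℝ))) * ∑ i : Fin n, (y i - ∑ j : Σ k : Fin K, Fin (p k), X i j * β j) ^ 2
          + γ * ∑ j : Σ k : Fin K, Fin (p k), |β j|)
      Set.univ bLASSO) :
    Filter.Tendsto (fun α => bLES α - bLASSO) (nhdsWithin 0 (Set.Ioi 0)) (nhds 0) :=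
  les_tendsto_lasso_general n K hn p hp P hP X y γ hγ hposdef bLES bLASSO hLES hLASSO
end

section
/- Exponential-sum bound at the LES minimizer: assume w_k > 0. Then any minimizer β̂ of the LES objective Q satisfies, for that group k, Σ_{j=1}^{p_k} exp(α|β̂_{kj}|) ≤ exp( ‖y‖₂²/(2nλw_k) + Σ_{l=1}^K (w_l/w_k) log(p_l) ). -/
/-- **Exponential-sum bound at the LES minimizer.**
Assume `w k > 0`.  Then any minimizer `β̂` of the LES objective `Q` satisfies,
for that group `k`,
`∑ j, exp (α |β̂ kj|) ≤ exp ( ‖y‖₂²/(2 n λ w k) + ∑ l, (w l / w k) log (p l) )`. -/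
theorem les_expsum_bound (n K : ℕ) (hn : 0 < n) (hK : 0 < K)
    (p : Fin K → ℕ) (hp : ∀ k, 1 ≤ p k)
    (X : Fin n → (Σ k : Fin K, Fin (p k)) → ℝ) (y : Fin n → ℝ)
    (lam α : ℝ) (hlam : 0 < lam) (hα : 0 < α)
    (w : Fin K → ℝ) (hw : ∀ l, 0 ≤ w l)
    (k : Fin K) (hwk : 0 < w k)
    (βh : (Σ k : Fin K, Fin (p k)) → ℝ)
    (hmin : IsMinOn
      (fun β : (Σ k : Fin K, Fin (p k)) → ℝ =>
        (1 / (2 * (n : ℝ))) * ∑ i : Fin n, (y i - ∑ j : Σ k : Fin K, Fin (p k), X i j * β j) ^ 2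
          + lam * ∑ l : Fin K, w l * Real.log (∑ j : Fin (p l), Real.exp (α * |β ⟨l, j⟩|)))
      Set.univ βh) :
    ∑ j : Fin (p k), Real.exp (α * |βh ⟨k, j⟩|) ≤
      Real.exp ((∑ i : Fin n, (y i) ^ 2) / (2 * (n : ℝ) * lam * w k) +
        ∑ l : Fin K, (w l / w k) * Real.log (p l)) := by
  set S : Fin K → ℝ := fun l => ∑ j : Fin (p l), Real.exp (α * |βh ⟨l, j⟩|) with hSdef
  have hSge : ∀ l, (p l : ℝ) ≤ S l := by
    intro l
    have : (p l : ℝ) = ∑ _j : Fin (p l), (1 : ℝ) := by simp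
    rw [this]
    exact Finset.sum_le_sum fun j _ =>
      Real.one_le_exp (by positivity)
  have hppos : ∀ l, (0 : ℝ) < (p l : ℝ) := fun l => by exact_mod_cast hp l
  have hS1 : ∀ l, (1 : ℝ) ≤ S l := fun l =>
    le_trans (by exact_mod_cast hp l) (hSge l)
  have hlog0 : ∀ l, 0 ≤ Real.log (S l) := fun l => Real.log_nonneg (hS1 l)
  have hlogge : ∀ l, Real.log (p l) ≤ Real.log (S l) := fun l =>
    Real.log_le_log (hppos l) (hSge l)
  have hQ := hmin (Set.mem_univ (0 : (Σ k : Fin K, Fin (p k)) → ℝ))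
  simp only [Pi.zero_apply, mul_zero, Finset.sum_const_zero, sub_zero, abs_zero,
    Real.exp_zero, Finset.sum_const, Finset.card_univ, Fintype.card_fin, nsmul_eq_mul,
    mul_one, Set.mem_setOf_eq] at hQ
  -- hQ : Q(βh) ≤ (1/(2n)) ∑ y² + lam ∑ w l log (p l)
  set A : ℝ := ∑ i : Fin n, (y i) ^ 2 with hA
  set B : ℝ := ∑ l : Fin K, w l * Real.log (p l) with hB
  have hquad : 0 ≤ (1 / (2 * (n : ℝ))) *
      ∑ i : Fin n, (y i - ∑ j : Σ k : Fin K, Fin (p k), X i j * βh j) ^ 2 := by positivity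
  have hsingle : w k * Real.log (S k) ≤ ∑ l : Fin K, w l * Real.log (S l) :=
    Finset.single_le_sum (fun l _ => mul_nonneg (hw l) (hlog0 l)) (Finset.mem_univ k)
  have hlogsum : ∑ l : Fin K, w l * Real.log (p l) ≤ ∑ l : Fin K, w l * Real.log (S l) :=
    Finset.sum_le_sum fun l _ => mul_le_mul_of_nonneg_left (hlogge l) (hw l)
  have key : lam * (w k * Real.log (S k)) ≤ (1 / (2 * (n : ℝ))) * A + lam * B := by
    have h1 : lam * (w k * Real.log (S k)) ≤ lam * ∑ l : Fin K, w l * Real.log (S l) :=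
      mul_le_mul_of_nonneg_left hsingle hlam.le
    calc lam * (w k * Real.log (S k)) ≤ lam * ∑ l : Fin K, w l * Real.log (S l) := h1
      _ ≤ (1 / (2 * (n : ℝ))) *
            (∑ i : Fin n, (y i - ∑ j : Σ k : Fin K, Fin (p k), X i j * βh j) ^ 2)
            + lam * ∑ l : Fin K, w l * Real.log (S l) := by linarith
      _ ≤ (1 / (2 * (n : ℝ))) * A + lam * B := hQ
  have hSpos : 0 < S k := lt_of_lt_of_le one_pos (hS1 k)
  have hnpos : (0 : ℝ) < (n : ℝ) := by exact_mod_cast hn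
  have hdiv : Real.log (S k) ≤ ((1 / (2 * (n : ℝ))) * A + lam * B) / (lam * w k) :=
    (le_div_iff₀ (by positivity)).mpr (by nlinarith [key])
  have hrhs : ((1 / (2 * (n : ℝ))) * A + lam * B) / (lam * w k)
      = A / (2 * (n : ℝ) * lam * w k) + ∑ l : Fin K, (w l / w k) * Real.log (p l) := by
    have hsum : ∑ l : Fin K, (w l / w k) * Real.log (p l) = B / w k := by
      rw [hB, Finset.sum_div]
      exact Finset.sum_congr rfl fun l _ => by ring
    rw [hsum]
    field_simp
  calc S k = Real.exp (Real.log (S k)) := (Real.exp_log hSpos).symm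
    _ ≤ Real.exp (A / (2 * (n : ℝ) * lam * w k) +
          ∑ l : Fin K, (w l / w k) * Real.log (p l)) := by
        rw [Real.exp_le_exp]; rw [← hrhs]; exact hdiv
end

section
/- KKT condition at a nonzero coordinate: if β̂ is a minimizer of the LES objective Q and β̂_{kj} ≠ 0, then (1/n)·X_{kj}^T (y − Xβ̂) = λ α w_k · ( exp(α|β̂_{kj}|) / Σ_{l=1}^{p_k} exp(α|β̂_{kl}|) ) · sign(β̂_{kj}). -/
/-!
At a minimizer, the restriction of `Q` to the line through `β̂` along the coordinate `(k, j)` has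
a minimum at `β̂ₖⱼ`. Since `β̂ₖⱼ ≠ 0`, `|·|` is differentiable there, so this restriction is
differentiable at `β̂ₖⱼ` and its derivative vanishes. Only the least-squares term and the
log-sum-exp term of group `k` depend on the coordinate, and their derivatives are
`-(1/n) X_{kj}ᵀ (y - X β̂)` and `λ α w_k (exp (α |β̂ₖⱼ|) / ∑ₗ exp (α |β̂ₖₗ|)) sign β̂ₖⱼ`.
-/

open Finset Function

theorem Real.sign_eq_coe_sign (x : ℝ) : Real.sign x = (SignType.sign x : ℝ) := by
  rcases lt_trichotomy x 0 with h | rfl | h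
  · simp [Real.sign_of_neg h, _root_.sign_neg h]
  · simp [Real.sign_zero]
  · simp [Real.sign_of_pos h, _root_.sign_pos h]

theorem IsMinOn.hasDerivAt_update_eq_zero {ι : Type*} [DecidableEq ι] {F : (ι → ℝ) → ℝ}
    {x : ι → ℝ} (hmin : IsMinOn F Set.univ x) (a : ι) {d : ℝ}
    (hd : HasDerivAt (fun t => F (update x a t)) d (x a)) : d = 0 := by
  refine IsLocalMin.hasDerivAt_eq_zero (Filter.Eventually.of_forall fun t => ?_) hd
  simpa only [update_eq_self] using isMinOn_univ_iff.mp hmin (update x a t)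

theorem hasDerivAt_sum_apply_update {ι : Type*} [Fintype ι] [DecidableEq ι] {E : ι → Type*}
    (ψ : ∀ l, E l → ℝ) (v : ∀ l, E l) (k : ι) {γ : ℝ → E k} {d t₀ : ℝ}
    (h : HasDerivAt (fun t => ψ k (γ t)) d t₀) :
    HasDerivAt (fun t => ∑ l, ψ l (update v k (γ t) l)) d t₀ := by
  have hsplit : (fun t => ∑ l, ψ l (update v k (γ t) l)) =
      fun t => ψ k (γ t) + ∑ l ∈ univ \ {k}, ψ l (v l) := by
    funext t
    simp only [apply_update ψ, sum_update_of_mem (mem_univ k)]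
  rw [hsplit]
  exact h.add_const _

theorem hasDerivAt_sum_mul_update {ι : Type*} [Fintype ι] [DecidableEq ι] (c β : ι → ℝ) (a : ι) :
    HasDerivAt (fun t => ∑ j, c j * update β a t j) (c a) (β a) :=
  hasDerivAt_sum_apply_update (fun j s => c j * s) β a (γ := fun t => t)
    (by simpa using (hasDerivAt_id (β a)).const_mul (c a))

theorem hasDerivAt_sum_sq_sub_update {m ι : Type*} [Fintype m] [Fintype ι] [DecidableEq ι]
    (X : m → ι → ℝ) (y : m → ℝ) (β : ι → ℝ) (a : ι) :
    HasDerivAt (fun t => ∑ i, (y i - ∑ j, X i j * update β a t j) ^ 2)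
      (-2 * ∑ i, X i a * (y i - ∑ j, X i j * β j)) (β a) := by
  have h := HasDerivAt.fun_sum fun i (_ : i ∈ univ) =>
    ((hasDerivAt_sum_mul_update (X i) β a).const_sub (y i)).fun_pow 2
  simp only [update_eq_self] at h
  refine h.congr_deriv ?_
  rw [mul_sum]
  exact sum_congr rfl fun i _ => by norm_num; ring

theorem hasDerivAt_log_sum_exp_abs_update {ι : Type*} [Fintype ι] [DecidableEq ι] (α : ℝ)
    (b : ι → ℝ) {j : ι} (hj : b j ≠ 0) :
    HasDerivAt (fun t => Real.log (∑ l, Real.exp (α * |update b j t l|)))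
      (α * (Real.exp (α * |b j|) / ∑ l, Real.exp (α * |b l|)) * SignType.sign (b j)) (b j) := by
  have hexp : HasDerivAt (fun t => Real.exp (α * |t|))
      (Real.exp (α * |b j|) * (α * SignType.sign (b j))) (b j) :=
    ((hasDerivAt_abs hj).const_mul α).exp
  have hsum := hasDerivAt_sum_apply_update (fun _ s => Real.exp (α * |s|)) b j (γ := fun t => t) hexp
  have hpos : 0 < ∑ l, Real.exp (α * |b l|) :=
    sum_pos (fun _ _ => Real.exp_pos _) ⟨j, mem_univ j⟩
  have hlog := hsum.log (by simpa only [update_eq_self] using hpos.ne')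
  simp only [update_eq_self] at hlog
  convert hlog using 1
  ring

theorem les_kkt_nonzero_general (n K : ℕ)
    (p : Fin K → ℕ)
    (X : Fin n → (Σ k : Fin K, Fin (p k)) → ℝ) (y : Fin n → ℝ)
    (lam α : ℝ)
    (w : Fin K → ℝ)
    (βh : (Σ k : Fin K, Fin (p k)) → ℝ)
    (hmin : IsMinOn
      (fun β : (Σ k : Fin K, Fin (p k)) → ℝ =>
        (1 / (2 * (n : ℝ))) * ∑ i : Fin n, (y i - ∑ j' : Σ k : Fin K, Fin (p k), X i j' * β j') ^ 2
          + lam * ∑ l : Fin K, w l * Real.log (∑ j' : Fin (p l), Real.exp (α * |β ⟨l, j'⟩|)))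
      Set.univ βh)
    (k : Fin K) (j : Fin (p k)) (hne : βh ⟨k, j⟩ ≠ 0) :
    (1 / (n : ℝ)) * ∑ i : Fin n,
        X i ⟨k, j⟩ * (y i - ∑ j' : Σ k : Fin K, Fin (p k), X i j' * βh j') =
      lam * α * w k *
        (Real.exp (α * |βh ⟨k, j⟩|) / ∑ l : Fin (p k), Real.exp (α * |βh ⟨k, l⟩|)) *
        Real.sign (βh ⟨k, j⟩) := by
  have hquad := (hasDerivAt_sum_sq_sub_update X y βh ⟨k, j⟩).const_mul (1 / (2 * (n : ℝ)))
  -- The penalty reads `β` group by group, i.e. through `Sigma.curry β`.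
  let V : ∀ l, Fin (p l) → ℝ := Sigma.curry βh
  have hpen := hasDerivAt_sum_apply_update
    (fun l b => w l * Real.log (∑ j', Real.exp (α * |b j'|))) V k
    ((hasDerivAt_log_sum_exp_abs_update α (V k) (j := j) hne).const_mul (w k))
  have hcurry : ∀ t, Sigma.curry (update βh ⟨k, j⟩ t) = update V k (update (V k) j t) :=
    fun t => Sigma.curry_update _ _ _
  simp only [← hcurry] at hpen
  have hzero := hmin.hasDerivAt_update_eq_zero ⟨k, j⟩ (hquad.add (hpen.const_mul lam))
  simp only [V, Sigma.curry] at hzero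
  rw [Real.sign_eq_coe_sign]
  linear_combination -hzero

/-- **KKT condition at a nonzero coordinate.**
If `β̂` is a minimizer of the LES objective `Q` and `β̂ kj ≠ 0`, then
`(1/n) X kjᵀ (y - X β̂) = λ α w k * exp (α |β̂ kj|) / (∑ l, exp (α |β̂ kl|)) * sign (β̂ kj)`. -/
theorem les_kkt_nonzero (n K : ℕ) (hn : 0 < n) (hK : 0 < K)
    (p : Fin K → ℕ) (hp : ∀ k, 1 ≤ p k)
    (X : Fin n → (Σ k : Fin K, Fin (p k)) → ℝ) (y : Fin n → ℝ)
    (lam α : ℝ) (hlam : 0 < lam) (hα : 0 < α)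
    (w : Fin K → ℝ) (hw : ∀ k, 0 ≤ w k)
    (βh : (Σ k : Fin K, Fin (p k)) → ℝ)
    (hmin : IsMinOn
      (fun β : (Σ k : Fin K, Fin (p k)) → ℝ =>
        (1 / (2 * (n : ℝ))) * ∑ i : Fin n, (y i - ∑ j' : Σ k : Fin K, Fin (p k), X i j' * β j') ^ 2
          + lam * ∑ l : Fin K, w l * Real.log (∑ j' : Fin (p l), Real.exp (α * |β ⟨l, j'⟩|)))
      Set.univ βh)
    (k : Fin K) (j : Fin (p k)) (hne : βh ⟨k, j⟩ ≠ 0) :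
    (1 / (n : ℝ)) * ∑ i : Fin n,
        X i ⟨k, j⟩ * (y i - ∑ j' : Σ k : Fin K, Fin (p k), X i j' * βh j') =
      lam * α * w k *
        (Real.exp (α * |βh ⟨k, j⟩|) / ∑ l : Fin (p k), Real.exp (α * |βh ⟨k, l⟩|)) *
        Real.sign (βh ⟨k, j⟩) :=
  les_kkt_nonzero_general n K p X y lam α w βh hmin k j hne
end

section
/- Probability of the good event: let ε be a random vector in ℝ^n with i.i.d. Gaussian N(0, σ²) coordinates, σ > 0, and assume the columns of X are normalized so that ‖X_{kj}‖₂² = n for every (k,j) (equivalently, the diagonal entries of X^T X / n all equal 1). Let A > 2√2 and γ = A σ √(log p / n). Then the probability that (2/n)·max_{k,j} |X_{kj}^T ε| > γ is at most p^{1 − A²/8}. -/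
open MeasureTheory ProbabilityTheory Real
open scoped NNReal ENNReal

/-!
The statistic `X_{kj}ᵀ ε` is a linear combination of independent centred Gaussians, hence
`N(0, σ² ‖X_{kj}‖²) = N(0, nσ²)`. For `Z ~ N(0, v)` and `t ≥ 0`, the density of `Z` on `{x > t}`
is at most `exp (-t²/(2v))` times that of `N(t, v)`, and similarly on `{x < -t}` with `N(-t, v)`;
shifting back, the two tails together are bounded by `exp (-t²/(2v))` times the mass of
`{x < 0} ∪ {x > 0}`, so `P(|Z| > t) ≤ exp (-t²/(2v))` with no factor `2`. With `t = nγ/2` this is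
`exp (-(A²/8) log p) = p^{-A²/8}` for each of the `p` columns, and a union bound finishes.
-/

namespace ProbabilityTheory

section GaussianTail

variable {v : ℝ≥0}

theorem gaussianPDFReal_le_exp_mul_gaussianPDFReal {t x : ℝ} (htx : t ^ 2 ≤ t * x) :
    gaussianPDFReal 0 v x ≤ exp (-t ^ 2 / (2 * v)) * gaussianPDFReal t v x := by
  simp only [gaussianPDFReal, sub_zero]
  rw [mul_left_comm, ← exp_add, ← add_div]
  gcongr
  nlinarith

theorem gaussianReal_le_exp_mul_gaussianReal_preimage_add (hv : v ≠ 0) {t : ℝ} {s : Set ℝ}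
    (hst : ∀ x ∈ s, t ^ 2 ≤ t * x) :
    gaussianReal 0 v s ≤
      ENNReal.ofReal (exp (-t ^ 2 / (2 * v))) * gaussianReal 0 v ((· + t) ⁻¹' s) := by
  have hshift : gaussianReal 0 v ((· + t) ⁻¹' s) = gaussianReal t v s := by
    rw [← (measurableEmbedding_addRight t).map_apply, gaussianReal_map_add_const, zero_add]
  rw [hshift, gaussianReal_apply 0 hv, gaussianReal_apply t hv,
    ← lintegral_const_mul _ (measurable_gaussianPDF t v)]
  refine setLIntegral_mono ((measurable_gaussianPDF t v).const_mul _) fun x hx => ?_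
  rw [gaussianPDF, gaussianPDF, ← ENNReal.ofReal_mul (exp_nonneg _)]
  exact ENNReal.ofReal_le_ofReal (gaussianPDFReal_le_exp_mul_gaussianPDFReal (hst x hx))

theorem gaussianReal_lt_abs_le {t : ℝ} (ht : 0 ≤ t) :
    gaussianReal 0 v {x | t < |x|} ≤ ENNReal.ofReal (exp (-t ^ 2 / (2 * v))) := by
  rcases eq_or_ne v 0 with rfl | hv
  · simpa using prob_le_one (μ := gaussianReal 0 0)
  set c := ENNReal.ofReal (exp (-t ^ 2 / (2 * v)))
  have hright : gaussianReal 0 v (Set.Ioi t) ≤ c * gaussianReal 0 v (Set.Ioi 0) := by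
    have h := gaussianReal_le_exp_mul_gaussianReal_preimage_add hv (s := Set.Ioi t)
      fun x (hx : t < x) => by nlinarith
    rwa [Set.preimage_add_const_Ioi, sub_self] at h
  have hleft : gaussianReal 0 v (Set.Iio (-t)) ≤ c * gaussianReal 0 v (Set.Iio 0) := by
    have h := gaussianReal_le_exp_mul_gaussianReal_preimage_add hv (t := -t) (s := Set.Iio (-t))
      fun x (hx : x < -t) => by nlinarith
    rwa [Set.preimage_add_const_Iio, sub_self, neg_sq] at h
  calc gaussianReal 0 v {x | t < |x|}
      ≤ gaussianReal 0 v (Set.Iio (-t) ∪ Set.Ioi t) := by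
        refine measure_mono fun x (hx : t < |x|) => ?_
        rcases lt_abs.mp hx with h | h
        · exact Or.inr h
        · exact Or.inl (by simp only [Set.mem_Iio]; linarith)
    _ ≤ c * gaussianReal 0 v (Set.Iio 0) + c * gaussianReal 0 v (Set.Ioi 0) :=
        (measure_union_le _ _).trans (add_le_add hleft hright)
    _ = c * gaussianReal 0 v (Set.Iio 0 ∪ Set.Ioi 0) := by
        rw [← mul_add, measure_union
          ((Set.Iic_disjoint_Ioi le_rfl).mono_left Set.Iio_subset_Iic_self) measurableSet_Ioi]
    _ ≤ c := mul_le_of_le_one_right' prob_le_one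

end GaussianTail

variable {Ω ι : Type*} [MeasurableSpace Ω] {μ : Measure Ω} {f : ι → Ω → ℝ}

theorem iIndepFun.map_sum_eq_gaussianReal (hf : ∀ i, Measurable (f i)) (hindep : iIndepFun f μ)
    {m : ι → ℝ} {v : ι → ℝ≥0} (hlaw : ∀ i, μ.map (f i) = gaussianReal (m i) (v i))
    (s : Finset ι) :
    μ.map (fun ω => ∑ i ∈ s, f i ω) = gaussianReal (∑ i ∈ s, m i) (∑ i ∈ s, v i) := by
  classical
  have := hindep.isProbabilityMeasure
  induction s using Finset.induction_on with
  | empty => simp [Measure.map_const, gaussianReal_zero_var]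
  | insert a s ha ih =>
    simp_rw [Finset.sum_insert ha]
    have hindep_a : IndepFun (f a) (fun ω => ∑ i ∈ s, f i ω) μ := by
      convert (hindep.indepFun_finsetSum_of_notMem hf ha).symm using 1
      ext ω
      simp
    exact gaussianReal_add_gaussianReal_of_indepFun hindep_a (hlaw a) ih

theorem iIndepFun.map_sum_const_mul_eq_gaussianReal (hf : ∀ i, Measurable (f i))
    (hindep : iIndepFun f μ) {v : ℝ≥0} (hlaw : ∀ i, μ.map (f i) = gaussianReal 0 v)
    (a : ι → ℝ) (s : Finset ι) :
    μ.map (fun ω => ∑ i ∈ s, a i * f i ω) =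
      gaussianReal 0 ((∑ i ∈ s, a i ^ 2).toNNReal * v) := by
  have hlaw_mul (i : ι) :
      μ.map (fun ω => a i * f i ω) = gaussianReal 0 (.mk (a i ^ 2) (sq_nonneg _) * v) := by
    change μ.map ((a i * ·) ∘ f i) = _
    rw [← Measure.map_map (measurable_const_mul (a i)) (hf i), hlaw, gaussianReal_map_const_mul,
      mul_zero]
  have hindep_mul := hindep.comp (fun i x => a i * x) fun i => measurable_const_mul (a i)
  convert hindep_mul.map_sum_eq_gaussianReal (fun i => (hf i).const_mul (a i)) hlaw_mul s using 2
  · simp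
  · ext
    simp [← Finset.sum_mul, Real.coe_toNNReal _ (Finset.sum_nonneg fun i _ => sq_nonneg (a i))]

theorem iIndepFun.measure_lt_abs_sum_const_mul_le (hf : ∀ i, Measurable (f i))
    (hindep : iIndepFun f μ) {v : ℝ≥0} (hlaw : ∀ i, μ.map (f i) = gaussianReal 0 v)
    (a : ι → ℝ) (s : Finset ι) {t : ℝ} (ht : 0 ≤ t) :
    μ {ω | t < |∑ i ∈ s, a i * f i ω|} ≤
      ENNReal.ofReal (exp (-t ^ 2 / (2 * ((∑ i ∈ s, a i ^ 2) * v)))) := by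
  have hmeas : Measurable fun ω => ∑ i ∈ s, a i * f i ω :=
    Finset.measurable_sum s fun i _ => (hf i).const_mul (a i)
  have hset : MeasurableSet {x : ℝ | t < |x|} := measurableSet_lt measurable_const measurable_abs
  calc μ {ω | t < |∑ i ∈ s, a i * f i ω|}
      = μ.map (fun ω => ∑ i ∈ s, a i * f i ω) {x | t < |x|} :=
        (Measure.map_apply hmeas hset).symm
    _ ≤ _ := by
      rw [hindep.map_sum_const_mul_eq_gaussianReal hf hlaw]
      convert gaussianReal_lt_abs_le ht using 5
      simp [Real.coe_toNNReal _ (Finset.sum_nonneg fun i _ => sq_nonneg (a i))]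

end ProbabilityTheory

theorem MeasureTheory.measure_iUnion_le_card_mul {α ι : Type*} [MeasurableSpace α] [Fintype ι]
    (μ : Measure α) {s : ι → Set α} {b : ℝ≥0∞} (h : ∀ i, μ (s i) ≤ b) :
    μ (⋃ i, s i) ≤ Fintype.card ι * b :=
  calc μ (⋃ i, s i) ≤ ∑ i, μ (s i) := measure_iUnion_fintype_le μ s
    _ ≤ ∑ _i : ι, b := Finset.sum_le_sum fun i _ => h i
    _ = Fintype.card ι * b := by rw [Finset.sum_const, Finset.card_univ, nsmul_eq_mul]

theorem les_good_event_prob_general (n K : ℕ) (hn : 0 < n) (hK : 0 < K)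
    (p : Fin K → ℕ) (hp : ∀ k, 1 ≤ p k)
    (P : ℕ) (hP : P = ∑ k : Fin K, p k)
    (X : Fin n → (Σ k : Fin K, Fin (p k)) → ℝ)
    (hcol : ∀ j : Σ k : Fin K, Fin (p k), ∑ i : Fin n, (X i j) ^ 2 = (n : ℝ))
    (σ : ℝ) (hσ : 0 < σ)
    {Ω : Type*} [MeasurableSpace Ω] (μ : Measure Ω)
    (ε : Ω → Fin n → ℝ)
    (hmeas : ∀ i, Measurable fun ω => ε ω i)
    (hdist : ∀ i, Measure.map (fun ω => ε ω i) μ = gaussianReal 0 (σ ^ 2).toNNReal)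
    (hindep : iIndepFun (m := fun _ : Fin n => Real.measurableSpace) (fun i ω => ε ω i) μ)
    (A : ℝ) (hA : 2 * Real.sqrt 2 < A)
    (γ : ℝ) (hγ : γ = A * σ * Real.sqrt (Real.log P / n)) :
    μ {ω | ∃ j : Σ k : Fin K, Fin (p k), γ < (2 / (n : ℝ)) * |∑ i : Fin n, X i j * ε ω i|} ≤
      ENNReal.ofReal ((P : ℝ) ^ ((1 : ℝ) - A ^ 2 / 8)) := by
  have hPpos : (0 : ℝ) < P := by
    rw [hP]
    exact_mod_cast Finset.sum_pos (fun k _ => hp k) ⟨⟨0, hK⟩, Finset.mem_univ _⟩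
  have hσ2 : ((σ ^ 2).toNNReal : ℝ) = σ ^ 2 := Real.coe_toNNReal _ (sq_nonneg σ)
  have hn' : (0 : ℝ) < n := by exact_mod_cast hn
  have hγ_nonneg : 0 ≤ γ := by
    rw [hγ]
    have : 0 ≤ A := by linarith [Real.sqrt_nonneg 2]
    positivity
  have hexponent : -(γ * (n / 2)) ^ 2 / (2 * ((n : ℝ) * (σ ^ 2).toNNReal)) =
      Real.log P * (-(A ^ 2 / 8)) := by
    rw [hσ2, hγ, mul_pow, mul_pow, mul_pow,
      Real.sq_sqrt (div_nonneg (Real.log_natCast_nonneg P) hn'.le)]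
    field_simp
    ring
  have hcolumn (j : Σ k : Fin K, Fin (p k)) :
      μ {ω | γ < (2 / (n : ℝ)) * |∑ i : Fin n, X i j * ε ω i|} ≤
        ENNReal.ofReal ((P : ℝ) ^ (-(A ^ 2 / 8))) := by
    have hbound := hindep.measure_lt_abs_sum_const_mul_le hmeas hdist (X · j) Finset.univ
      (by positivity : 0 ≤ γ * (n / 2))
    rw [hcol j, hexponent, ← Real.rpow_def_of_pos hPpos] at hbound
    convert hbound using 2
    ext ω
    rw [Set.mem_ofPred_eq, Set.mem_ofPred_eq, ← div_lt_iff₀' (by positivity), div_div_eq_mul_div,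
      mul_div_assoc]
  rw [Set.ofPred_exists]
  calc μ (⋃ j, {ω | γ < (2 / (n : ℝ)) * |∑ i : Fin n, X i j * ε ω i|})
      ≤ Fintype.card (Σ k : Fin K, Fin (p k)) * ENNReal.ofReal ((P : ℝ) ^ (-(A ^ 2 / 8))) :=
        measure_iUnion_le_card_mul μ hcolumn
    _ = ENNReal.ofReal ((P : ℝ) ^ ((1 : ℝ) - A ^ 2 / 8)) := by
        simp_rw [Fintype.card_sigma, Fintype.card_fin, ← hP]
        rw [← ENNReal.ofReal_natCast, ← ENNReal.ofReal_mul hPpos.le, sub_eq_add_neg,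
          Real.rpow_add hPpos, Real.rpow_one]

/-- **Probability of the good event.**
Let `ε` be a random vector in `ℝ^n` with i.i.d. Gaussian `N(0, σ²)` coordinates
and assume the columns of `X` satisfy `‖X kj‖₂² = n` for every `(k,j)`.
Let `A > 2√2` and `γ = A σ √(log p / n)`.  Then the probability that
`(2/n) max_{k,j} |X kjᵀ ε| > γ` is at most `p^{1 - A²/8}`. -/
theorem les_good_event_prob (n K : ℕ) (hn : 0 < n) (hK : 0 < K)
    (p : Fin K → ℕ) (hp : ∀ k, 1 ≤ p k)
    (P : ℕ) (hP : P = ∑ k : Fin K, p k)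
    (X : Fin n → (Σ k : Fin K, Fin (p k)) → ℝ)
    (hcol : ∀ j : Σ k : Fin K, Fin (p k), ∑ i : Fin n, (X i j) ^ 2 = (n : ℝ))
    (σ : ℝ) (hσ : 0 < σ)
    {Ω : Type*} [MeasurableSpace Ω] (μ : Measure Ω) [IsProbabilityMeasure μ]
    (ε : Ω → Fin n → ℝ)
    (hmeas : ∀ i, Measurable fun ω => ε ω i)
    (hdist : ∀ i, Measure.map (fun ω => ε ω i) μ = gaussianReal 0 (σ ^ 2).toNNReal)
    (hindep : iIndepFun (m := fun _ : Fin n => Real.measurableSpace) (fun i ω => ε ω i) μ)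
    (A : ℝ) (hA : 2 * Real.sqrt 2 < A)
    (γ : ℝ) (hγ : γ = A * σ * Real.sqrt (Real.log P / n)) :
    μ {ω | ∃ j : Σ k : Fin K, Fin (p k), γ < (2 / (n : ℝ)) * |∑ i : Fin n, X i j * ε ω i|} ≤
      ENNReal.ofReal ((P : ℝ) ^ ((1 : ℝ) - A ^ 2 / 8)) :=
  les_good_event_prob_general n K hn hK p hp P hP X hcol σ hσ μ ε hmeas hdist hindep A hA γ hγ
end

section
/- Prediction-loss bound (deterministic core of Theorem 1, inequality (17)): assume y = Xβ* + ε with (2/n)·max_{k,j} |X_{kj}^T ε| ≤ λα, let s = |G(β*)|, and assume the REgroup(κ, s) hypothesis holds. Then every minimizer β̂ of Q satisfies (1/n)‖X(β̂ − β*)‖₂² ≤ 16 s (λα)² / κ². -/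
/-!
Write `Δ = β̂ - β*` and `P` for the penalty.  Comparing `Q β̂ ≤ Q β*` gives
`‖XΔ‖² ≤ 2⟪ε, XΔ⟫ + 2nλ (P β* - P β̂)`, and the noise condition bounds `2⟪ε, XΔ⟫` by
`nλα ‖Δ‖₁`.  On a group of the support, log-sum-exp is `α`-Lipschitz for `ℓ¹`; off the support
`β*_k = 0`, and Jensen's inequality for `exp` gives
`p_k (log p_k - log ∑_j exp (α |β̂_kj|)) ≤ -α ‖Δ_k‖₁`, the weight `p_k` being what makes this the
full `ℓ¹` norm.  Hence `‖XΔ‖² ≤ nλα (∑_{k ∈ G} (1 + 2 p_k) ‖Δ_k‖₁ - ∑_{k ∉ G} ‖Δ_k‖₁)`; the left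
side is nonnegative, so `Δ` lies in the REgroup cone.  Cauchy–Schwarz bounds the weighted `ℓ¹` norm
over `G` by `2 √(s W)`, where `W` is the quantity REgroup controls, and altogether
`‖XΔ‖² ≤ (4λα √(sn) / κ) ‖XΔ‖`.
-/

open Finset Matrix Real

namespace Real

variable {ι : Type*} [Fintype ι]

theorem log_sum_exp_le_log_sum_exp_add [Nonempty ι] {a b : ι → ℝ} {c : ℝ}
    (h : ∀ j, a j ≤ b j + c) : log (∑ j, exp (a j)) ≤ log (∑ j, exp (b j)) + c := by
  have hpos (f : ι → ℝ) : 0 < ∑ j, exp (f j) := sum_pos (fun j _ ↦ exp_pos _) univ_nonempty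
  calc log (∑ j, exp (a j)) ≤ log (exp c * ∑ j, exp (b j)) := by
        refine log_le_log (hpos a) ?_
        rw [mul_sum]
        gcongr with j
        rw [← exp_add]
        exact exp_le_exp.2 (by linarith [h j])
    _ = log (∑ j, exp (b j)) + c := by
        rw [log_mul (exp_ne_zero _) (hpos b).ne', log_exp, add_comm]

theorem log_card_add_sum_div_card_le_log_sum_exp [Nonempty ι] (x : ι → ℝ) :
    log (Fintype.card ι) + (∑ j, x j) / Fintype.card ι ≤ log (∑ j, exp (x j)) := by
  have hm : (0 : ℝ) < Fintype.card ι := by exact_mod_cast Fintype.card_pos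
  set m : ℝ := (Fintype.card ι : ℝ)
  have hjensen : exp (∑ j, m⁻¹ • x j) ≤ ∑ j, m⁻¹ • exp (x j) :=
    convexOn_exp.map_sum_le (fun _ _ ↦ by positivity) (by simp [m, hm.ne'])
      (fun _ _ ↦ Set.mem_univ _)
  simp only [smul_eq_mul, ← mul_sum] at hjensen
  calc log m + (∑ j, x j) / m = log (m * exp (m⁻¹ * ∑ j, x j)) := by
        rw [log_mul hm.ne' (exp_ne_zero _), log_exp, div_eq_inv_mul]
    _ ≤ log (∑ j, exp (x j)) := by
        refine log_le_log (by positivity) ?_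
        rwa [← le_inv_mul_iff₀ hm]

theorem log_sum_exp_mul_abs_sub_le [Nonempty ι] {α : ℝ} (hα : 0 ≤ α) (a b : ι → ℝ) :
    log (∑ j, exp (α * |a j|)) - log (∑ j, exp (α * |b j|)) ≤ α * ∑ j, |b j - a j| := by
  refine sub_le_iff_le_add'.2 <| log_sum_exp_le_log_sum_exp_add fun j ↦ ?_
  have hj : |b j - a j| ≤ ∑ j, |b j - a j| :=
    single_le_sum (f := fun j ↦ |b j - a j|) (fun _ _ ↦ abs_nonneg _) (mem_univ j)
  rw [← mul_add]
  gcongr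
  linarith [abs_sub_abs_le_abs_sub (a j) (b j), abs_sub_comm (a j) (b j)]

theorem card_mul_log_card_sub_log_sum_exp_le [Nonempty ι] (α : ℝ) (b : ι → ℝ) :
    Fintype.card ι * (log (Fintype.card ι) - log (∑ j, exp (α * |b j|)))
      ≤ -(α * ∑ j, |b j|) := by
  have hm : (0 : ℝ) < Fintype.card ι := by exact_mod_cast Fintype.card_pos
  have h := mul_le_mul_of_nonneg_left
    (log_card_add_sum_div_card_le_log_sum_exp fun j ↦ α * |b j|) hm.le
  rw [← mul_sum, mul_add, mul_div_cancel₀ _ hm.ne'] at h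
  linarith

theorem le_sq_of_le_mul_sqrt {T C : ℝ} (h : T ≤ C * √T) : T ≤ C ^ 2 := by
  rcases le_or_gt T 0 with hT | hT
  · exact hT.trans (sq_nonneg C)
  have hroot : √T ≤ C := le_of_mul_le_mul_right (by rwa [mul_self_sqrt hT.le]) (sqrt_pos.2 hT)
  calc T = √T ^ 2 := (sq_sqrt hT.le).symm
    _ ≤ C ^ 2 := by gcongr

end Real

theorem Finset.sum_le_sqrt_card_mul_sum_sq {ι : Type*} (s : Finset ι) (f : ι → ℝ) :
    ∑ i ∈ s, f i ≤ √(#s * ∑ i ∈ s, f i ^ 2) :=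
  (le_abs_self _).trans (Real.abs_le_sqrt sq_sum_le_card_mul_sum_sq)

theorem one_add_two_mul_card_mul_sum_abs_le {ι : Type*} [Fintype ι] (b : ι → ℝ) :
    (1 + 2 * (Fintype.card ι : ℝ)) * ∑ j, |b j|
      ≤ 2 * √(Fintype.card ι * (1 + Fintype.card ι) ^ 2 * ∑ j, b j ^ 2) := by
  have hcs := sum_le_sqrt_card_mul_sum_sq univ fun j ↦ |b j|
  simp only [sq_abs, card_univ] at hcs
  set m : ℝ := (Fintype.card ι : ℝ)
  calc (1 + 2 * m) * ∑ j, |b j| ≤ 2 * (1 + m) * √(m * ∑ j, b j ^ 2) := by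
        gcongr
        linarith
    _ = 2 * √(m * (1 + m) ^ 2 * ∑ j, b j ^ 2) := by
        rw [mul_right_comm m, sqrt_mul' _ (sq_nonneg _), sqrt_sq (by positivity)]
        ring

theorem Matrix.dotProduct_mulVec_le_mul_sum_abs {m ι : Type*} [Fintype m] [Fintype ι]
    (X : Matrix m ι ℝ) (ε : m → ℝ) {c : ℝ} (h : ∀ j, |(Xᵀ *ᵥ ε) j| ≤ c) (Δ : ι → ℝ) :
    ε ⬝ᵥ (X *ᵥ Δ) ≤ c * ∑ j, |Δ j| := by
  rw [dotProduct_mulVec, ← mulVec_transpose, dotProduct, mul_sum]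
  refine sum_le_sum fun j _ ↦ ?_
  calc (Xᵀ *ᵥ ε) j * Δ j ≤ |(Xᵀ *ᵥ ε) j| * |Δ j| := by rw [← abs_mul]; exact le_abs_self _
    _ ≤ c * |Δ j| := by gcongr; exact h j

theorem sum_sq_le_of_isMinOn {n : ℕ} {ι : Type*} [Fintype ι] (hn : 0 < n) {X : Fin n → ι → ℝ}
    {βstar : ι → ℝ} {ε y : Fin n → ℝ} (hmodel : ∀ i, y i = (∑ j, X i j * βstar j) + ε i)
    {lam : ℝ} {pen : (ι → ℝ) → ℝ} {βh : ι → ℝ}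
    (hmin : IsMinOn (fun β ↦ (1 / (2 * (n : ℝ))) * ∑ i, (y i - ∑ j, X i j * β j) ^ 2 + lam * pen β)
      Set.univ βh) :
    ∑ i, (∑ j, X i j * (βh j - βstar j)) ^ 2
      ≤ 2 * ∑ i, ε i * ∑ j, X i j * (βh j - βstar j) + 2 * n * lam * (pen βstar - pen βh) := by
  have hres (β : ι → ℝ) (i : Fin n) :
      y i - ∑ j, X i j * β j = ε i - ∑ j, X i j * (β j - βstar j) := by
    simp only [mul_sub, sum_sub_distrib, hmodel]
    ring
  have h := isMinOn_iff.1 hmin βstar (Set.mem_univ _)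
  simp only [hres, sub_self, mul_zero, sum_const_zero, sub_zero] at h
  have hexpand : ∑ i, (ε i - ∑ j, X i j * (βh j - βstar j)) ^ 2
      = ∑ i, ε i ^ 2 - 2 * ∑ i, ε i * ∑ j, X i j * (βh j - βstar j)
        + ∑ i, (∑ j, X i j * (βh j - βstar j)) ^ 2 := by
    simp only [sub_sq, sum_add_distrib, sum_sub_distrib, mul_sum, mul_assoc]
  rw [hexpand] at h
  have hn' : (0 : ℝ) < n := by exact_mod_cast hn
  field_simp at h
  linarith

theorem one_div_mul_le_of_le_mul_sqrt_of_mul_sqrt_le {T W s n c κ : ℝ} (hn : 0 < n) (hκ : 0 < κ)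
    (hc : 0 ≤ c) (hs : 0 ≤ s) (hT : T ≤ n * c * (2 * √(s * W))) (hW : κ * √n * √W ≤ 2 * √T) :
    1 / n * T ≤ 16 * s * c ^ 2 / κ ^ 2 := by
  have hroot : T ≤ 4 * c * √s * √n / κ * √T := by
    rw [div_mul_eq_mul_div, le_div_iff₀ hκ]
    calc T * κ ≤ n * c * (2 * √(s * W)) * κ := by gcongr
      _ = 2 * c * √s * √n * (κ * √n * √W) := by
        rw [sqrt_mul hs]
        nth_rw 1 [← mul_self_sqrt hn.le]
        ring
      _ ≤ 2 * c * √s * √n * (2 * √T) := by gcongr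
      _ = 4 * c * √s * √n * √T := by ring
  calc 1 / n * T ≤ 1 / n * (4 * c * √s * √n / κ) ^ 2 := by
        gcongr
        exact le_sq_of_le_mul_sqrt hroot
    _ = 16 * s * c ^ 2 / κ ^ 2 := by
        rw [div_pow, mul_pow, mul_pow, mul_pow, sq_sqrt hs, sq_sqrt hn.le]
        field_simp
        ring

section Groups

variable {K : Type*} {p : K → ℕ}

theorem sum_mul_log_sum_exp_sub_le [Fintype K] [DecidableEq K] (hp : ∀ k, 1 ≤ p k) {α : ℝ}
    (hα : 0 ≤ α) {G : Finset K} {βstar : (Σ k, Fin (p k)) → ℝ} (hG : ∀ k ∉ G, ∀ j, βstar ⟨k, j⟩ = 0)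
    (βh : (Σ k, Fin (p k)) → ℝ) :
    ∑ k, (p k : ℝ) * log (∑ j : Fin (p k), exp (α * |βstar ⟨k, j⟩|))
        - ∑ k, (p k : ℝ) * log (∑ j : Fin (p k), exp (α * |βh ⟨k, j⟩|))
      ≤ α * (∑ k ∈ G, p k * ∑ j : Fin (p k), |βh ⟨k, j⟩ - βstar ⟨k, j⟩|
        - ∑ k ∈ Gᶜ, ∑ j : Fin (p k), |βh ⟨k, j⟩ - βstar ⟨k, j⟩|) := by
  have (k : K) : Nonempty (Fin (p k)) := Fin.pos_iff_nonempty.1 (hp k)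
  rw [← sum_sub_distrib, ← sum_add_sum_compl G, mul_sub, mul_sum, mul_sum, sub_eq_add_neg,
    ← sum_neg_distrib]
  gcongr with k _ k hk
  · rw [← mul_sub, mul_left_comm]
    gcongr
    exact log_sum_exp_mul_abs_sub_le hα _ _
  · have h := card_mul_log_card_sub_log_sum_exp_le α fun j ↦ βh ⟨k, j⟩
    simp only [Fintype.card_fin] at h
    simp only [hG k (mem_compl.1 hk), sub_zero, abs_zero, mul_zero, exp_zero, sum_const,
      card_univ, Fintype.card_fin, nsmul_one]
    linarith

theorem sum_one_add_two_mul_sum_abs_le (G : Finset K) (Δ : (Σ k, Fin (p k)) → ℝ) :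
    ∑ k ∈ G, (1 + 2 * (p k : ℝ)) * ∑ j : Fin (p k), |Δ ⟨k, j⟩|
      ≤ 2 * √(#G * ∑ k ∈ G, p k * (1 + (p k : ℝ)) ^ 2 * ∑ j : Fin (p k), Δ ⟨k, j⟩ ^ 2) := by
  have hw (k : K) : √(p k * (1 + (p k : ℝ)) ^ 2 * ∑ j : Fin (p k), Δ ⟨k, j⟩ ^ 2) ^ 2
      = p k * (1 + (p k : ℝ)) ^ 2 * ∑ j : Fin (p k), Δ ⟨k, j⟩ ^ 2 := sq_sqrt (by positivity)
  calc ∑ k ∈ G, (1 + 2 * (p k : ℝ)) * ∑ j : Fin (p k), |Δ ⟨k, j⟩|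
      ≤ 2 * ∑ k ∈ G, √(p k * (1 + (p k : ℝ)) ^ 2 * ∑ j : Fin (p k), Δ ⟨k, j⟩ ^ 2) := by
        rw [mul_sum]
        refine sum_le_sum fun k _ ↦ ?_
        simpa using one_add_two_mul_card_mul_sum_abs_le fun j : Fin (p k) ↦ Δ ⟨k, j⟩
    _ ≤ 2 * √(#G * ∑ k ∈ G, p k * (1 + (p k : ℝ)) ^ 2 * ∑ j : Fin (p k), Δ ⟨k, j⟩ ^ 2) := by
        gcongr
        have h := sum_le_sqrt_card_mul_sum_sq G fun k ↦ √(
          p k * (1 + (p k : ℝ)) ^ 2 * ∑ j : Fin (p k), Δ ⟨k, j⟩ ^ 2)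
        rwa [sum_congr rfl fun k _ ↦ hw k] at h

theorem les_basic_inequality [Fintype K] [DecidableEq K] {n : ℕ} (hn : 0 < n)
    (hp : ∀ k, 1 ≤ p k) {X : Fin n → (Σ k, Fin (p k)) → ℝ} {βstar : (Σ k, Fin (p k)) → ℝ}
    {ε y : Fin n → ℝ} (hmodel : ∀ i, y i = (∑ j, X i j * βstar j) + ε i)
    {lam α : ℝ} (hlam : 0 ≤ lam) (hα : 0 ≤ α)
    (hnoise : ∀ j, (2 / (n : ℝ)) * |∑ i, X i j * ε i| ≤ lam * α)
    {G : Finset K} (hG : ∀ k ∉ G, ∀ j, βstar ⟨k, j⟩ = 0) {βh : (Σ k, Fin (p k)) → ℝ}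
    (hmin : IsMinOn (fun β : (Σ k, Fin (p k)) → ℝ ↦
        (1 / (2 * (n : ℝ))) * ∑ i, (y i - ∑ j, X i j * β j) ^ 2
          + lam * ∑ k, (p k : ℝ) * log (∑ j : Fin (p k), exp (α * |β ⟨k, j⟩|)))
      Set.univ βh) :
    ∑ i, (∑ j, X i j * (βh j - βstar j)) ^ 2
      ≤ n * (lam * α) * (∑ k ∈ G, (1 + 2 * (p k : ℝ)) * ∑ j : Fin (p k), |βh ⟨k, j⟩ - βstar ⟨k, j⟩|
        - ∑ k ∈ Gᶜ, ∑ j : Fin (p k), |βh ⟨k, j⟩ - βstar ⟨k, j⟩|) := by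
  have hn' : (0 : ℝ) < n := by exact_mod_cast hn
  have hquad := sum_sq_le_of_isMinOn hn hmodel hmin
  have hcross : ∑ i, ε i * ∑ j, X i j * (βh j - βstar j)
      ≤ n * (lam * α) / 2 * ∑ j, |βh j - βstar j| :=
    dotProduct_mulVec_le_mul_sum_abs X ε (fun j ↦ by
      have := hnoise j
      rw [div_mul_eq_mul_div, div_le_iff₀ hn'] at this
      show |∑ i, X i j * ε i| ≤ _
      linarith) (βh - βstar)
  have hpen := mul_le_mul_of_nonneg_left (sum_mul_log_sum_exp_sub_le hp hα hG βh)
    (by positivity : 0 ≤ 2 * (n : ℝ) * lam)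
  rw [Fintype.sum_sigma, ← sum_add_sum_compl G] at hcross
  have hweights : ∑ k ∈ G, (1 + 2 * (p k : ℝ)) * ∑ j : Fin (p k), |βh ⟨k, j⟩ - βstar ⟨k, j⟩|
      = ∑ k ∈ G, ∑ j : Fin (p k), |βh ⟨k, j⟩ - βstar ⟨k, j⟩|
        + 2 * ∑ k ∈ G, p k * ∑ j : Fin (p k), |βh ⟨k, j⟩ - βstar ⟨k, j⟩| := by
    rw [mul_sum, ← sum_add_distrib]
    exact sum_congr rfl fun k _ ↦ by ring
  rw [hweights]
  linarith

end Groups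

theorem les_prediction_bound_general (n K : ℕ) (hn : 0 < n)
    (p : Fin K → ℕ) (hp : ∀ k, 1 ≤ p k)
    (X : Fin n → (Σ k : Fin K, Fin (p k)) → ℝ)
    (βstar : (Σ k : Fin K, Fin (p k)) → ℝ) (ε y : Fin n → ℝ)
    (hmodel : ∀ i, y i = (∑ j : Σ k : Fin K, Fin (p k), X i j * βstar j) + ε i)
    (lam α : ℝ) (hlam : 0 < lam) (hα : 0 < α)
    (hnoise : ∀ j : Σ k : Fin K, Fin (p k),
      (2 / (n : ℝ)) * |∑ i : Fin n, X i j * ε i| ≤ lam * α)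
    (G : Finset (Fin K)) (hG : ∀ k, k ∈ G ↔ ∃ j : Fin (p k), βstar ⟨k, j⟩ ≠ 0)
    (s : ℕ) (hs : s = G.card)
    (κ : ℝ) (hκ : 0 < κ)
    (hRE : ∀ G' : Finset (Fin K), G'.card ≤ s →
      ∀ Δ : (Σ k : Fin K, Fin (p k)) → ℝ, Δ ≠ 0 →
      (∑ k ∈ G'ᶜ, ∑ j : Fin (p k), |Δ ⟨k, j⟩|) ≤
        (∑ k ∈ G', (1 + 2 * (p k : ℝ)) * ∑ j : Fin (p k), |Δ ⟨k, j⟩|) →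
      κ * Real.sqrt (n : ℝ) *
          Real.sqrt (∑ k ∈ G', (p k : ℝ) * (1 + (p k : ℝ)) ^ 2 * ∑ j : Fin (p k), (Δ ⟨k, j⟩) ^ 2) ≤
        2 * Real.sqrt (∑ i : Fin n, (∑ j : Σ k : Fin K, Fin (p k), X i j * Δ j) ^ 2))
    (βh : (Σ k : Fin K, Fin (p k)) → ℝ)
    (hmin : IsMinOn
      (fun β : (Σ k : Fin K, Fin (p k)) → ℝ =>
        (1 / (2 * (n : ℝ))) * ∑ i : Fin n, (y i - ∑ j : Σ k : Fin K, Fin (p k), X i j * β j) ^ 2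
          + lam * ∑ k : Fin K, (p k : ℝ) * Real.log (∑ j : Fin (p k), Real.exp (α * |β ⟨k, j⟩|)))
      Set.univ βh) :
    (1 / (n : ℝ)) * ∑ i : Fin n, (∑ j : Σ k : Fin K, Fin (p k), X i j * (βh j - βstar j)) ^ 2 ≤
      16 * (s : ℝ) * (lam * α) ^ 2 / κ ^ 2 := by
  subst hs
  obtain hΔ | hΔ := eq_or_ne (βh - βstar) 0
  · obtain rfl := sub_eq_zero.1 hΔ
    simp only [sub_self, mul_zero, sum_const_zero, zero_pow two_ne_zero, mul_zero]
    positivity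
  have hsupp (k) (hk : k ∉ G) (j) : βstar ⟨k, j⟩ = 0 := not_not.1 fun h ↦ hk ((hG k).2 ⟨j, h⟩)
  have hbasic := les_basic_inequality hn hp hmodel hlam.le hα.le hnoise hsupp hmin
  have hcone := sub_nonneg.1 <| nonneg_of_mul_nonneg_right
    ((sum_nonneg fun i _ ↦ sq_nonneg _).trans hbasic) (by positivity)
  refine one_div_mul_le_of_le_mul_sqrt_of_mul_sqrt_le (by positivity) hκ (by positivity)
    (by positivity) (hbasic.trans ?_) (hRE G le_rfl _ hΔ hcone)
  calc _ ≤ n * (lam * α) * ∑ k ∈ G, (1 + 2 * (p k : ℝ)) * ∑ j, |(βh - βstar) ⟨k, j⟩| := by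
        gcongr
        exact sub_le_self _ (by positivity)
    _ ≤ _ := by gcongr; exact sum_one_add_two_mul_sum_abs_le G (βh - βstar)

/-- **Prediction-loss bound** (deterministic core of Theorem 1, inequality (17)).
Assume `y = X β* + ε` with `(2/n) max_{k,j} |X kjᵀ ε| ≤ λ α`, let
`s = |G(β*)|`, and assume the REgroup(κ, s) hypothesis.  Then every minimizer
`β̂` of `Q` (with weights `w k = p k`) satisfies
`(1/n) ‖X (β̂ - β*)‖₂² ≤ 16 s (λ α)² / κ²`. -/
theorem les_prediction_bound (n K : ℕ) (hn : 0 < n) (hK : 0 < K)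
    (p : Fin K → ℕ) (hp : ∀ k, 1 ≤ p k)
    (X : Fin n → (Σ k : Fin K, Fin (p k)) → ℝ)
    (βstar : (Σ k : Fin K, Fin (p k)) → ℝ) (ε y : Fin n → ℝ)
    (hmodel : ∀ i, y i = (∑ j : Σ k : Fin K, Fin (p k), X i j * βstar j) + ε i)
    (lam α : ℝ) (hlam : 0 < lam) (hα : 0 < α)
    (hnoise : ∀ j : Σ k : Fin K, Fin (p k),
      (2 / (n : ℝ)) * |∑ i : Fin n, X i j * ε i| ≤ lam * α)
    (G : Finset (Fin K)) (hG : ∀ k, k ∈ G ↔ ∃ j : Fin (p k), βstar ⟨k, j⟩ ≠ 0)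
    (s : ℕ) (hs : s = G.card)
    (κ : ℝ) (hκ : 0 < κ)
    (hRE : ∀ G' : Finset (Fin K), G'.card ≤ s →
      ∀ Δ : (Σ k : Fin K, Fin (p k)) → ℝ, Δ ≠ 0 →
      (∑ k ∈ G'ᶜ, ∑ j : Fin (p k), |Δ ⟨k, j⟩|) ≤
        (∑ k ∈ G', (1 + 2 * (p k : ℝ)) * ∑ j : Fin (p k), |Δ ⟨k, j⟩|) →
      κ * Real.sqrt (n : ℝ) *
          Real.sqrt (∑ k ∈ G', (p k : ℝ) * (1 + (p k : ℝ)) ^ 2 * ∑ j : Fin (p k), (Δ ⟨k, j⟩) ^ 2) ≤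
        2 * Real.sqrt (∑ i : Fin n, (∑ j : Σ k : Fin K, Fin (p k), X i j * Δ j) ^ 2))
    (βh : (Σ k : Fin K, Fin (p k)) → ℝ)
    (hmin : IsMinOn
      (fun β : (Σ k : Fin K, Fin (p k)) → ℝ =>
        (1 / (2 * (n : ℝ))) * ∑ i : Fin n, (y i - ∑ j : Σ k : Fin K, Fin (p k), X i j * β j) ^ 2
          + lam * ∑ k : Fin K, (p k : ℝ) * Real.log (∑ j : Fin (p k), Real.exp (α * |β ⟨k, j⟩|)))
      Set.univ βh) :
    (1 / (n : ℝ)) * ∑ i : Fin n, (∑ j : Σ k : Fin K, Fin (p k), X i j * (βh j - βstar j)) ^ 2 ≤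
      16 * (s : ℝ) * (lam * α) ^ 2 / κ ^ 2 :=
  les_prediction_bound_general n K hn p hp X βstar ε y hmodel lam α hlam hα hnoise G hG s hs κ hκ
    hRE βh hmin
end
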